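/- Let P be a row-stochastic matrix on a finite set S with |S| = n, whose closed communicating classes are exactly C_1, …, C_M with M ≥ 2, and set C := C_1 ∪ … ∪ C_M. For ε ∈ (0,1) let P_ε := (1−ε)P + (ε/n)·J, where J is the all-ones matrix. Let v ∈ C_1 and let a be an arborescence of C rooted at v (a map a : C ∖ {v} → C whose iterates from every j ∈ C ∖ {v} reach v, with no cycles) such that exactly M−1 elements j ∈ C ∖ {v} have j and a(j) in different classes among C_1,…,C_M. Let W := ∏ P(j, a(j)), the product being over all j ∈ C ∖ {v} such that j and a(j) lie in the same class. Then, as ε → 0⁺, ∏_{j∈C∖{v}} P_ε(j, a(j)) = ε^{M−1} (1−ε)^{|C|−M} n^{−(M−1)} W + O(ε^M). -/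

import Mathlib

open Filter Topology Asymptotics

/-- A matrix is row-stochastic: nonnegative entries and each row sums to 1. -/
def RowStochastic {S : Type*} [Fintype S] (P : Matrix S S ℝ) : Prop :=
  (∀ i j, 0 ≤ P i j) ∧ ∀ i, ∑ j, P i j = 1

/-- A closed communicating class: a nonempty set which no transition leaves, and
within which every state leads to every other in some number `k ≥ 1` of steps. -/
def ClosedClass {S : Type*} [Fintype S] [DecidableEq S] (P : Matrix S S ℝ) (C : Set S) : Prop :=
  C.Nonempty ∧ (∀ i ∈ C, ∀ j, j ∉ C → P i j = 0) ∧
    ∀ i ∈ C, ∀ j ∈ C, ∃ k, 1 ≤ k ∧ 0 < (P ^ k) i j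

/-!
Every edge of the arborescence that stays inside a closed class contributes
`(1 - ε) P(j, a(j)) + ε / n`, while an edge leaving a class `C_k` has `P(j, a(j)) = 0`
because `C_k` is closed, so it contributes exactly `ε / n`. Factoring out the
`M - 1` cross edges leaves `(ε / n)^(M-1)` times a polynomial in `ε` whose value at
`0` is `W` and which differs from `(1 - ε)^(|C| - M) W` by `O(ε)`.
-/

open Finset

section AffineProducts

variable {ι : Type*}

theorem isBigO_prod_affine_sub_pow_mul_prod (T : Finset ι) (a b : ι → ℝ) :
    (fun ε : ℝ => ∏ j ∈ T, ((1 - ε) * a j + ε * b j) - (1 - ε) ^ #T * ∏ j ∈ T, a j)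
      =O[𝓝 0] fun ε => ε := by
  have hd : DifferentiableAt ℝ
      (fun ε : ℝ => ∏ j ∈ T, ((1 - ε) * a j + ε * b j) - (1 - ε) ^ #T * ∏ j ∈ T, a j) 0 := by
    fun_prop
  simpa using hd.isBigO_sub

theorem prod_mul_add_eq_pow_mul_prod_filter (T : Finset ι) (q : ι → Prop) [DecidablePred q]
    {a : ι → ℝ} (ha : ∀ j ∈ T, ¬ q j → a j = 0) (s c : ℝ) :
    ∏ j ∈ T, (s * a j + c) = c ^ #(T.filter (¬ q ·)) * ∏ j ∈ T.filter q, (s * a j + c) := by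
  rw [← prod_filter_mul_prod_filter_not T q, mul_comm]
  congr 1
  rw [← prod_const]
  refine prod_congr rfl fun j hj => ?_
  rw [mem_filter] at hj
  rw [ha j hj.1 hj.2, mul_zero, zero_add]

theorem isBigO_prod_affine_sub_leading_term (T : Finset ι) (q : ι → Prop) [DecidablePred q]
    {a : ι → ℝ} (ha : ∀ j ∈ T, ¬ q j → a j = 0) (c : ℝ) :
    (fun ε : ℝ => ∏ j ∈ T, ((1 - ε) * a j + ε * c) -
        ε ^ #(T.filter (¬ q ·)) * (1 - ε) ^ #(T.filter q) * c ^ #(T.filter (¬ q ·)) *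
          ∏ j ∈ T.filter q, a j)
      =O[𝓝 0] fun ε => ε ^ (#(T.filter (¬ q ·)) + 1) := by
  set m := #(T.filter (¬ q ·))
  have hsame := (isBigO_prod_affine_sub_pow_mul_prod (T.filter q) a fun _ => c).const_mul_left
    (c ^ m)
  refine ((isBigO_refl (fun ε : ℝ => ε ^ m) _).mul hsame).congr (fun ε => ?_) fun ε => ?_
  · rw [prod_mul_add_eq_pow_mul_prod_filter T q ha]
    ring
  · rw [pow_succ]

end AffineProducts

theorem apply_eq_zero_of_not_mem_common_closedClass {S : Type*} [Fintype S] [DecidableEq S]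
    {P : Matrix S S ℝ} {M : ℕ} {C : Fin M → Finset S} (hC : ∀ k, ClosedClass P (C k : Set S))
    {i j : S} (hi : i ∈ univ.biUnion C) (hij : ¬ ∃ k, i ∈ C k ∧ j ∈ C k) : P i j = 0 := by
  obtain ⟨k, -, hik⟩ := mem_biUnion.mp hi
  exact (hC k).2.1 i hik j fun hjk => hij ⟨k, hik, hjk⟩

theorem arborescence_weight_leading_term_uniform
    {S : Type*} [Fintype S] [DecidableEq S]
    (P : Matrix S S ℝ)
    (M : ℕ) (hM : 2 ≤ M) (C : Fin M → Finset S)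
    (hCcls : ∀ k, ClosedClass P (C k : Set S))
    (CU : Finset S) (hCU : CU = Finset.univ.biUnion C)
    (Pe : ℝ → Matrix S S ℝ)
    (hPe : ∀ ε, Pe ε =
      (1 - ε) • P + (ε / (Fintype.card S : ℝ)) • Matrix.of (fun _ _ => (1 : ℝ)))
    (v : S) (hv : v ∈ C ⟨0, by omega⟩)
    (f : S → S)
    (hcross : ((CU.erase v).filter
        (fun j => ¬ ∃ k, j ∈ C k ∧ f j ∈ C k)).card = M - 1)
    (W : ℝ)
    (hW : W = ∏ j ∈ (CU.erase v).filter (fun j => ∃ k, j ∈ C k ∧ f j ∈ C k),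
        P j (f j)) :
    (fun ε : ℝ => (∏ j ∈ CU.erase v, Pe ε j (f j)) -
        ε ^ (M - 1) * (1 - ε) ^ (CU.card - M) *
          ((Fintype.card S : ℝ) ^ (M - 1))⁻¹ * W)
      =O[𝓝[>] (0 : ℝ)] fun ε => ε ^ M := by
  subst hCU hW
  have hvCU : v ∈ univ.biUnion C := mem_biUnion.mpr ⟨_, mem_univ _, hv⟩
  have hsame : #((univ.biUnion C).erase v |>.filter fun j => ∃ k, j ∈ C k ∧ f j ∈ C k) =
      #(univ.biUnion C) - M := by
    have := card_filter_add_card_filter_not (s := (univ.biUnion C).erase v)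
      fun j => ∃ k, j ∈ C k ∧ f j ∈ C k
    rw [card_erase_of_mem hvCU, hcross] at this
    omega
  have hentry : ∀ ε j, Pe ε j (f j) = (1 - ε) * P j (f j) + ε * (Fintype.card S : ℝ)⁻¹ := by
    intro ε j
    simp [hPe, div_eq_mul_inv]
  have key := isBigO_prod_affine_sub_leading_term ((univ.biUnion C).erase v)
    (fun j => ∃ k, j ∈ C k ∧ f j ∈ C k) (a := fun j => P j (f j))
    (fun j hj => apply_eq_zero_of_not_mem_common_closedClass hCcls (mem_of_mem_erase hj))
    (Fintype.card S : ℝ)⁻¹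
  rw [hcross, hsame, Nat.sub_add_cancel (by omega), inv_pow] at key
  simp_rw [hentry]
  exact (key.congr_left fun ε => by ring).mono nhdsWithin_le_nhds
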